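/- Let g₀ and g₁ be bijections of (0, π/2) onto itself with g₀(π/4) = π/4 and g₁(π/4) = 7π/16. In the Euclidean plane ℝ², the transversal line y = x meets the line y = 0 at (0,0) and the line y = 1 at (1,1); the Euclidean angle ∠((1,0), (0,0), (1,1)) equals π/4 and the Euclidean angle ∠((0,0), (1,1), (2,1)) equals 3π/4, and the relabeled interior angles on the same side of the transversal satisfy E g₀(∠((1,0),(0,0),(1,1))) + E g₁(∠((0,0),(1,1),(2,1))) = 13π/16 < π, yet the lines {(x, 0) : x ∈ ℝ} and {(x, 1) : x ∈ ℝ} are disjoint. Hence Euclid's parallel postulate fails for the relabeled angle congruence. -/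

import Mathlib

open Real Set EuclideanGeometry

/-- The extension `E g` of a relabeling function `g` of `(0, π/2)` to `(0, π)`:
`E g x = g x` for `x < π/2`, `E g (π/2) = π/2`, and `E g x = π - g (π - x)` for `x > π/2`. -/
noncomputable def extendLabel (g : ℝ → ℝ) (x : ℝ) : ℝ :=
  if x < π / 2 then g x
  else if x = π / 2 then π / 2
  else π - g (π - x)

/-- The point `(a, b)` of the Euclidean plane. -/
noncomputable def pt (a b : ℝ) : EuclideanSpace ℝ (Fin 2) := WithLp.toLp 2 ![a, b]

section extendLabel

variable (g : ℝ → ℝ) {x : ℝ}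

lemma extendLabel_of_lt (hx : x < π / 2) : extendLabel g x = g x := if_pos hx

lemma extendLabel_of_gt (hx : π / 2 < x) : extendLabel g x = π - g (π - x) := by
  rw [extendLabel, if_neg hx.not_gt, if_neg hx.ne']

end extendLabel

section pt

@[simp] lemma pt_apply_zero (a b : ℝ) : pt a b 0 = a := rfl

@[simp] lemma pt_apply_one (a b : ℝ) : pt a b 1 = b := rfl

lemma pt_sub_pt (a b c d : ℝ) : pt a b - pt c d = pt (a - c) (b - d) := by
  ext i; fin_cases i <;> rfl

lemma neg_pt (a b : ℝ) : -pt a b = pt (-a) (-b) := by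
  ext i; fin_cases i <;> rfl

lemma inner_pt (a b c d : ℝ) : inner ℝ (pt a b) (pt c d) = a * c + b * d := by
  simp [pt, PiLp.inner_apply, Fin.sum_univ_two, mul_comm]

lemma norm_pt (a b : ℝ) : ‖pt a b‖ = √(a ^ 2 + b ^ 2) := by
  simp [pt, EuclideanSpace.norm_eq, Fin.sum_univ_two]

end pt

lemma InnerProductGeometry.angle_pt_one_zero_pt_one_one :
    InnerProductGeometry.angle (pt 1 0) (pt 1 1) = π / 4 := by
  have hcos : inner ℝ (pt 1 0) (pt 1 1) / (‖pt 1 0‖ * ‖pt 1 1‖) = cos (π / 4) := by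
    rw [inner_pt, norm_pt, norm_pt, cos_pi_div_four]
    have h2 : √2 * √2 = 2 := mul_self_sqrt zero_le_two
    field_simp
    norm_num [h2]
  rw [InnerProductGeometry.angle, hcos, arccos_cos (by positivity) (by linarith [pi_pos])]

lemma angle_pt_one_zero_pt_zero_zero_pt_one_one : ∠ (pt 1 0) (pt 0 0) (pt 1 1) = π / 4 := by
  rw [EuclideanGeometry.angle, vsub_eq_sub, vsub_eq_sub, pt_sub_pt, pt_sub_pt]
  simpa using InnerProductGeometry.angle_pt_one_zero_pt_one_one

lemma angle_pt_zero_zero_pt_one_one_pt_two_one : ∠ (pt 0 0) (pt 1 1) (pt 2 1) = 3 * π / 4 := by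
  rw [EuclideanGeometry.angle, vsub_eq_sub, vsub_eq_sub, pt_sub_pt, pt_sub_pt]
  have h : pt (0 - 1) (0 - 1) = -pt 1 1 := by rw [neg_pt]; norm_num
  rw [h, InnerProductGeometry.angle_neg_left, InnerProductGeometry.angle_comm]
  norm_num [InnerProductGeometry.angle_pt_one_zero_pt_one_one]
  ring

lemma disjoint_setOf_apply_eq {ι : Type*} {a b : ℝ} (hab : a ≠ b) (i : ι) :
    Disjoint {p : EuclideanSpace ℝ ι | p i = a} {p | p i = b} :=
  Set.disjoint_left.2 fun _ ha hb => hab (ha.symm.trans hb)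

theorem parallel_postulate_fails_general (g₀ g₁ : ℝ → ℝ)
    (hv₀ : g₀ (π / 4) = π / 4) (hv₁ : g₁ (π / 4) = 7 * π / 16) :
    pt 0 0 ∈ {p : EuclideanSpace ℝ (Fin 2) | p 1 = p 0} ∧
    pt 0 0 ∈ {p : EuclideanSpace ℝ (Fin 2) | p 1 = 0} ∧
    pt 1 1 ∈ {p : EuclideanSpace ℝ (Fin 2) | p 1 = p 0} ∧
    pt 1 1 ∈ {p : EuclideanSpace ℝ (Fin 2) | p 1 = 1} ∧
    ∠ (pt 1 0) (pt 0 0) (pt 1 1) = π / 4 ∧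
    ∠ (pt 0 0) (pt 1 1) (pt 2 1) = 3 * π / 4 ∧
    extendLabel g₀ (∠ (pt 1 0) (pt 0 0) (pt 1 1)) +
      extendLabel g₁ (∠ (pt 0 0) (pt 1 1) (pt 2 1)) = 13 * π / 16 ∧
    13 * π / 16 < π ∧
    Disjoint {p : EuclideanSpace ℝ (Fin 2) | p 1 = 0}
      {p : EuclideanSpace ℝ (Fin 2) | p 1 = 1} := by
  have hπ := pi_pos
  refine ⟨by simp, by simp, by simp, by simp, angle_pt_one_zero_pt_zero_zero_pt_one_one,
    angle_pt_zero_zero_pt_one_one_pt_two_one, ?_, by linarith,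
    disjoint_setOf_apply_eq zero_ne_one 1⟩
  rw [angle_pt_one_zero_pt_zero_zero_pt_one_one, angle_pt_zero_zero_pt_one_one_pt_two_one,
    extendLabel_of_lt g₀ (by linarith), extendLabel_of_gt g₁ (by linarith),
    show π - 3 * π / 4 = π / 4 by ring, hv₀, hv₁]
  ring

/-- With relabelings `g₀` at `(0,0)` (with `g₀ (π/4) = π/4`) and `g₁` at `(1,1)`
(with `g₁ (π/4) = 7π/16`): the transversal `y = x` meets `y = 0` at `(0,0)` and
`y = 1` at `(1,1)`; the Euclidean angles are `∠((1,0),(0,0),(1,1)) = π/4` and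
`∠((0,0),(1,1),(2,1)) = 3π/4`; the relabeled interior angles on the same side sum to
`13π/16 < π`; yet the lines `y = 0` and `y = 1` are disjoint.  Hence the parallel
postulate fails for the relabeled angle congruence. -/
theorem parallel_postulate_fails (g₀ g₁ : ℝ → ℝ)
    (hg₀ : Set.BijOn g₀ (Ioo 0 (π / 2)) (Ioo 0 (π / 2)))
    (hg₁ : Set.BijOn g₁ (Ioo 0 (π / 2)) (Ioo 0 (π / 2)))
    (hv₀ : g₀ (π / 4) = π / 4) (hv₁ : g₁ (π / 4) = 7 * π / 16) :
    pt 0 0 ∈ {p : EuclideanSpace ℝ (Fin 2) | p 1 = p 0} ∧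
    pt 0 0 ∈ {p : EuclideanSpace ℝ (Fin 2) | p 1 = 0} ∧
    pt 1 1 ∈ {p : EuclideanSpace ℝ (Fin 2) | p 1 = p 0} ∧
    pt 1 1 ∈ {p : EuclideanSpace ℝ (Fin 2) | p 1 = 1} ∧
    ∠ (pt 1 0) (pt 0 0) (pt 1 1) = π / 4 ∧
    ∠ (pt 0 0) (pt 1 1) (pt 2 1) = 3 * π / 4 ∧
    extendLabel g₀ (∠ (pt 1 0) (pt 0 0) (pt 1 1)) +
      extendLabel g₁ (∠ (pt 0 0) (pt 1 1) (pt 2 1)) = 13 * π / 16 ∧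
    13 * π / 16 < π ∧
    Disjoint {p : EuclideanSpace ℝ (Fin 2) | p 1 = 0}
      {p : EuclideanSpace ℝ (Fin 2) | p 1 = 1} :=
  parallel_postulate_fails_general g₀ g₁ hv₀ hv₁
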